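/- Let V be a real normed vector space, a : V × V → ℝ a bilinear form, S a linear subspace of V, and F, G : V → ℝ linear functionals. Let C_a, δ₁, δ₂ ≥ 0 and let w, w_h, φ ∈ V and φ_h ∈ S satisfy: (i) a(w, φ) = F(φ); (ii) a(w_h, v) = F(v) for all v ∈ S; (iii) |a(x, y)| ≤ C_a‖x‖‖y‖ for all x, y ∈ V; (iv) |a(v, φ) − G(v)| ≤ δ₁‖v‖ for all v ∈ V; (v) |a(w, v) − F(v)| ≤ δ₂‖v‖ for all v ∈ V. Then |G(w − w_h)| ≤ δ₁‖w − w_h‖ + δ₂‖φ − φ_h‖ + C_a‖w − w_h‖‖φ − φ_h‖. -/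

import Mathlib

/-!
With `e = w - w_h`, Galerkin orthogonality holds only up to the consistency defect of `w`:
by (i) and (ii), `a e φ_h = a w φ_h - F φ_h = F (φ - φ_h) - a w (φ - φ_h)`. Splitting
`a e φ = a e (φ - φ_h) + a e φ_h`, the quantity `G e` becomes a sum of three terms bounded by
(iv), (iii) and (v) respectively.
-/

theorem LinearMap.duality_error_decomposition {R M : Type*} [CommRing R] [AddCommGroup M]
    [Module R M] (a : M →ₗ[R] M →ₗ[R] R) (F G : M →ₗ[R] R) {w w_h φ φ_h : M}
    (hw : a w φ = F φ) (hw_h : a w_h φ_h = F φ_h) :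
    G (w - w_h) = (G (w - w_h) - a (w - w_h) φ) + a (w - w_h) (φ - φ_h)
      + (F (φ - φ_h) - a w (φ - φ_h)) := by
  simp only [map_sub, LinearMap.sub_apply]
  linear_combination hw - hw_h

theorem abstract_duality_estimate_general
    {V : Type*} [NormedAddCommGroup V] [NormedSpace ℝ V]
    (a : V →ₗ[ℝ] V →ₗ[ℝ] ℝ) (S : Submodule ℝ V)
    (F G : V →ₗ[ℝ] ℝ)
    (C_a δ₁ δ₂ : ℝ)
    (w w_h φ : V) (φ_h : V) (hφ_h : φ_h ∈ S)
    (hi : a w φ = F φ)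
    (hii : ∀ v ∈ S, a w_h v = F v)
    (hiii : ∀ x y : V, |a x y| ≤ C_a * ‖x‖ * ‖y‖)
    (hiv : ∀ v : V, |a v φ - G v| ≤ δ₁ * ‖v‖)
    (hv : ∀ v : V, |a w v - F v| ≤ δ₂ * ‖v‖) :
    |G (w - w_h)| ≤
      δ₁ * ‖w - w_h‖ + δ₂ * ‖φ - φ_h‖ + C_a * ‖w - w_h‖ * ‖φ - φ_h‖ := by
  rw [a.duality_error_decomposition F G hi (hii φ_h hφ_h)]
  calc _ ≤ |G (w - w_h) - a (w - w_h) φ| + |a (w - w_h) (φ - φ_h)|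
          + |F (φ - φ_h) - a w (φ - φ_h)| := abs_add_three _ _ _
    _ ≤ δ₁ * ‖w - w_h‖ + C_a * ‖w - w_h‖ * ‖φ - φ_h‖ + δ₂ * ‖φ - φ_h‖ := by
        rw [abs_sub_comm, abs_sub_comm (F _)]
        gcongr
        exacts [hiv _, hiii _ _, hv _]
    _ = _ := by ring

/-- Quantitative abstract form of the duality (Aubin–Nitsche type) estimate proved
in Theorem 2.3 for the nonconforming Crouzeix–Raviart method. -/
theorem abstract_duality_estimate
    {V : Type*} [NormedAddCommGroup V] [NormedSpace ℝ V]
    (a : V →ₗ[ℝ] V →ₗ[ℝ] ℝ) (S : Submodule ℝ V)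
    (F G : V →ₗ[ℝ] ℝ)
    (C_a δ₁ δ₂ : ℝ) (hC_a : 0 ≤ C_a) (hδ₁ : 0 ≤ δ₁) (hδ₂ : 0 ≤ δ₂)
    (w w_h φ : V) (φ_h : V) (hφ_h : φ_h ∈ S)
    (hi : a w φ = F φ)
    (hii : ∀ v ∈ S, a w_h v = F v)
    (hiii : ∀ x y : V, |a x y| ≤ C_a * ‖x‖ * ‖y‖)
    (hiv : ∀ v : V, |a v φ - G v| ≤ δ₁ * ‖v‖)
    (hv : ∀ v : V, |a w v - F v| ≤ δ₂ * ‖v‖) :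
    |G (w - w_h)| ≤
      δ₁ * ‖w - w_h‖ + δ₂ * ‖φ - φ_h‖ + C_a * ‖w - w_h‖ * ‖φ - φ_h‖ :=
  abstract_duality_estimate_general a S F G C_a δ₁ δ₂ w w_h φ φ_h hφ_h hi hii hiii hiv hv
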